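/- Let μ > 0, let N be a natural number with N ≥ 2, and let T ∈ ℝ with T ≥ μ·N. Then the function g(η) = η · (T/η − μ)² is strictly decreasing on the interval [1, N−1]: for all real η₁, η₂ with 1 ≤ η₁ < η₂ ≤ N−1, one has g(η₂) < g(η₁). -/

import Mathlib

/- Expanding, `η (T/η − μ)² = T²/η − 2Tμ + μ²η`, so the difference of two values factors as
`g x − g y = (y − x) (T²/(xy) − μ²)`. Hence `g` decreases between `x < y` exactly when
`μ² x y < T²`, which holds for `x, y ≤ N − 1` because `T ≥ μN > μ(N − 1) ≥ 0`. -/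

lemma mul_div_sub_sq_sub_mul_div_sub_sq (T μ : ℝ) {x y : ℝ} (hx : x ≠ 0) (hy : y ≠ 0) :
    x * (T / x - μ) ^ 2 - y * (T / y - μ) ^ 2 = (y - x) * (T ^ 2 / (x * y) - μ ^ 2) := by
  field_simp
  ring

lemma strictAntiOn_mul_div_sub_sq {T μ c : ℝ} (hc : (μ * c) ^ 2 < T ^ 2) :
    StrictAntiOn (fun η : ℝ => η * (T / η - μ) ^ 2) (Set.Ioc 0 c) := by
  rintro x ⟨hx, hxc⟩ y ⟨hy, hyc⟩ hxy
  have hxy_pos : 0 < x * y := mul_pos hx hy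
  have hμxy : μ ^ 2 * (x * y) < T ^ 2 :=
    calc μ ^ 2 * (x * y) ≤ μ ^ 2 * (c * c) := by gcongr; linarith
      _ = (μ * c) ^ 2 := by ring
      _ < T ^ 2 := hc
  have hgap : 0 < T ^ 2 / (x * y) - μ ^ 2 := by
    rw [sub_pos, lt_div_iff₀ hxy_pos]
    exact hμxy
  have hdiff := mul_div_sub_sq_sub_mul_div_sub_sq T μ hx.ne' hy.ne'
  have hprod : 0 < (y - x) * (T ^ 2 / (x * y) - μ ^ 2) := mul_pos (sub_pos.2 hxy) hgap
  show y * (T / y - μ) ^ 2 < x * (T / x - μ) ^ 2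
  linarith

theorem path_cost_strictly_decreasing_general (μ : ℝ) (hμ : 0 < μ) (N : ℕ)
    (T : ℝ) (hT : μ * (N : ℝ) ≤ T) (η₁ η₂ : ℝ)
    (h1 : 1 ≤ η₁) (h12 : η₁ < η₂) (h2 : η₂ ≤ (N : ℝ) - 1) :
    η₂ * (T / η₂ - μ) ^ 2 < η₁ * (T / η₁ - μ) ^ 2 := by
  have hη₁ : 0 < η₁ := by linarith
  have hcost : (μ * ((N : ℝ) - 1)) ^ 2 < T ^ 2 := by
    refine pow_lt_pow_left₀ ?_ (mul_nonneg hμ.le (by linarith)) two_ne_zero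
    linarith
  exact strictAntiOn_mul_div_sub_sq hcost ⟨hη₁, by linarith⟩ ⟨by linarith, h2⟩ h12

/-- If `μ > 0`, `N ≥ 2` and `T ≥ μ N`, then `g(η) = η (T/η − μ)²` is strictly
decreasing on `[1, N−1]`. -/
theorem path_cost_strictly_decreasing (μ : ℝ) (hμ : 0 < μ) (N : ℕ) (hN : 2 ≤ N)
    (T : ℝ) (hT : μ * (N : ℝ) ≤ T) (η₁ η₂ : ℝ)
    (h1 : 1 ≤ η₁) (h12 : η₁ < η₂) (h2 : η₂ ≤ (N : ℝ) - 1) :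
    η₂ * (T / η₂ - μ) ^ 2 < η₁ * (T / η₁ - μ) ^ 2 :=
  path_cost_strictly_decreasing_general μ hμ N T hT η₁ η₂ h1 h12 h2
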